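/- arXiv:2006.01719 — 5 statements merged into one kernel-verified Lean document; each statement's English description precedes it below -/
import Mathlib

section
/- Let Y ∈ 𝕊^n be a symmetric matrix satisfying λ_{n−r}(Y) − λ_{n−r+1}(Y) ≥ δ for some δ > 0 (eigenvalues in decreasing order). Then for any symmetric matrix X with X ⪰ 0 and trace(X) = 1, there exists a matrix W of the form W = V S V^⊤, where the columns of V ∈ ℝ^{n×r} are orthonormal eigenvectors of Y corresponding to its r smallest eigenvalues, S ⪰ 0, and trace(S) = 1, such that ⟨X − W, Y⟩ ≥ (δ/2)·‖X − W‖_F². -/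
open Matrix


lemma psd_diag_nonneg {n : ℕ} {M : Matrix (Fin n) (Fin n) ℝ} (hM : M.PosSemidef)
    (a : Fin n) : 0 ≤ M a a := by
  have := hM.dotProduct_mulVec_nonneg (Pi.single a 1)
  simpa [mulVec_single, single_dotProduct] using this

lemma psd_entry_sq_le {n : ℕ} {M : Matrix (Fin n) (Fin n) ℝ} (hM : M.PosSemidef)
    (a b : Fin n) : M a b ^ 2 ≤ M a a * M b b := by
  rcases eq_or_ne a b with rfl | hab
  · have h := psd_diag_nonneg hM a
    nlinarith [sq_nonneg (M a a)]
  · have hsym : M b a = M a b := by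
      have h2 := congrFun (congrFun hM.isHermitian.eq b) a
      simpa [conjTranspose_apply] using h2.symm
    have key : ∀ u : ℝ, 0 ≤ M a a * (u * u) + (2 * M a b) * u + M b b := by
      intro u
      have h := hM.dotProduct_mulVec_nonneg (Pi.single a u + Pi.single b 1)
      simp only [star_trivial, mulVec_add, mulVec_single, dotProduct_add,
        add_dotProduct, single_dotProduct, Pi.add_apply, Pi.smul_apply, op_smul_eq_smul,
        smul_eq_mul, Matrix.col_apply] at h
      rw [hsym] at h
      ring_nf at h ⊢
      linarith
    have := discrim_le_zero key
    simp only [discrim] at this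
    nlinarith

lemma sum_castLE {n r : ℕ} (hr : 0 < r) (h : r ≤ n) (f : Fin n → ℝ) :
    ∑ j : Fin r, f (Fin.castLE h j) =
      ∑ i ∈ Finset.univ.filter (fun i : Fin n => i.val < r), f i := by
  refine Finset.sum_nbij' (i := fun j => Fin.castLE h j)
    (j := fun i => ⟨i.val % r, Nat.mod_lt _ hr⟩) ?_ ?_ ?_ ?_ ?_
  · intro a _; simp [Fin.castLE]
  · intro b _; simp
  · intro a _; ext; simp [Nat.mod_eq_of_lt a.isLt]
  · intro b hb; simp only [Finset.mem_filter] at hb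
    ext; simp [Nat.mod_eq_of_lt hb.2]
  · intro a _; rfl

noncomputable def eigDesc {n : ℕ} {A : Matrix (Fin n) (Fin n) ℝ}
    (hA : A.IsHermitian) (i : Fin n) : ℝ :=
  hA.eigenvalues (Tuple.sort hA.eigenvalues i.rev)

noncomputable def frob {n : ℕ} (A : Matrix (Fin n) (Fin n) ℝ) : ℝ :=
  Real.sqrt ((Aᵀ * A).trace)

lemma trace_sq {n : ℕ} (A : Matrix (Fin n) (Fin n) ℝ) :
    (Aᵀ * A).trace = ∑ a : Fin n, ∑ b : Fin n, (A b a)^2 := by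
  simp [Matrix.trace, Matrix.diag, Matrix.mul_apply, sq]

lemma frob_sq {n : ℕ} (A : Matrix (Fin n) (Fin n) ℝ) :
    frob A ^ 2 = ∑ a : Fin n, ∑ b : Fin n, (A b a)^2 := by
  rw [frob, Real.sq_sqrt, trace_sq]
  rw [trace_sq]
  positivity

lemma conj_trace_eq {n : ℕ} (Q A : Matrix (Fin n) (Fin n) ℝ) (hQ : Q * Qᵀ = 1) :
    ((Qᵀ * A * Q)ᵀ * (Qᵀ * A * Q)).trace = (Aᵀ * A).trace := by
  have h1 : (Qᵀ * A * Q)ᵀ = Qᵀ * Aᵀ * Q := by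
    simp [Matrix.transpose_mul, Matrix.mul_assoc]
  rw [h1]
  have h2 : Qᵀ * Aᵀ * Q * (Qᵀ * A * Q) = Qᵀ * (Aᵀ * (A * Q)) := by
    simp only [Matrix.mul_assoc]
    rw [← Matrix.mul_assoc Q Qᵀ, hQ, Matrix.one_mul]
  rw [h2, Matrix.trace_mul_comm]
  rw [show Aᵀ * (A * Q) * Qᵀ = Aᵀ * A * (Q * Qᵀ) by simp [Matrix.mul_assoc], hQ,
    Matrix.mul_one]

set_option maxHeartbeats 2000000 in
/-- Lemma 2 of the paper: if `λ_{n-r}(Y) - λ_{n-r+1}(Y) ≥ δ > 0`, then for any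
`X ⪰ 0` with `trace X = 1` there is `W = V S Vᵀ` in the spectral `r`-th set of
`Y` (columns of `V` orthonormal eigenvectors of `Y` for its `r` smallest
eigenvalues, `S ⪰ 0`, `trace S = 1`) with `⟨X - W, Y⟩ ≥ (δ/2)‖X - W‖_F²`. -/
theorem stmt_4 {n r : ℕ} (hr : 1 ≤ r) (hrn : r < n) (δ : ℝ) (hδ : 0 < δ)
    (Y : Matrix (Fin n) (Fin n) ℝ) (hY : Y.IsHermitian)
    (hgap : δ ≤ eigDesc hY ⟨n - r - 1, by omega⟩ - eigDesc hY ⟨n - r, by omega⟩)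
    (X : Matrix (Fin n) (Fin n) ℝ) (hX : X.PosSemidef) (hXtr : X.trace = 1) :
    ∃ (V : Matrix (Fin n) (Fin r) ℝ) (S : Matrix (Fin r) (Fin r) ℝ),
      Vᵀ * V = 1 ∧
      (∀ j : Fin r, ∃ μ : ℝ, μ ≤ eigDesc hY ⟨n - r, by omega⟩ ∧
        Y *ᵥ (fun i => V i j) = μ • (fun i => V i j)) ∧
      S.PosSemidef ∧ S.trace = 1 ∧
      (δ / 2) * frob (X - V * S * Vᵀ) ^ 2 ≤ ((X - V * S * Vᵀ)ᵀ * Y).trace := by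
  classical
  set σ : Equiv.Perm (Fin n) := Tuple.sort hY.eigenvalues with hσ
  set d : Fin n → ℝ := fun i => hY.eigenvalues (σ i) with hd
  have dmono : Monotone d := Tuple.monotone_sort hY.eigenvalues
  set Q : Matrix (Fin n) (Fin n) ℝ :=
    Matrix.of (fun i j => (hY.eigenvectorBasis (σ j) : EuclideanSpace ℝ (Fin n)) i) with hQ
  -- orthonormality
  have hQO : Qᵀ * Q = 1 := by
    ext j k
    have horth := hY.eigenvectorBasis.orthonormal
    rw [orthonormal_iff_ite] at horth
    have h := horth (σ j) (σ k)
    simp only [PiLp.inner_apply, RCLike.inner_apply, conj_trivial] at h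
    simp only [Matrix.mul_apply, transpose_apply, Matrix.one_apply, hQ, Matrix.of_apply]
    rw [← Finset.sum_congr rfl fun x _ => mul_comm ((hY.eigenvectorBasis (σ k)).ofLp x) ((hY.eigenvectorBasis (σ j)).ofLp x), h]
    simp [σ.injective.eq_iff]
  have hQQt : Q * Qᵀ = 1 := mul_eq_one_comm.mp hQO
  -- eigenvector columns
  have hEV : ∀ j : Fin n, Y *ᵥ (fun i => Q i j) = d j • (fun i => Q i j) := by
    intro j
    exact hY.mulVec_eigenvectorBasis (σ j)
  have hYQ : Y * Q = Q * diagonal d := by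
    ext i j
    have h := congrFun (hEV j) i
    rw [Matrix.mul_diagonal]
    simpa [Matrix.mul_apply, Matrix.mulVec, dotProduct, mul_comm] using h
  have hYspec : Y = Q * diagonal d * Qᵀ := by
    calc Y = Y * (Q * Qᵀ) := by rw [hQQt, Matrix.mul_one]
    _ = (Y * Q) * Qᵀ := by rw [Matrix.mul_assoc]
    _ = Q * diagonal d * Qᵀ := by rw [hYQ]
  have hct : ∀ {a b : ℕ} (A : Matrix (Fin a) (Fin b) ℝ), Aᴴ = Aᵀ :=
    fun A => conjTranspose_eq_transpose_of_trivial A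
  have hXsym : Xᵀ = X := by rw [← hct]; exact hX.isHermitian.eq
  -- the matrix B = Qᵀ X Q
  set B : Matrix (Fin n) (Fin n) ℝ := Qᵀ * X * Q with hB
  have hBpsd : B.PosSemidef := by
    have := hX.conjTranspose_mul_mul_same Q
    rwa [hct] at this
  have hBtr : B.trace = 1 := by
    rw [hB, Matrix.trace_mul_comm, ← Matrix.mul_assoc, hQQt, Matrix.one_mul, hXtr]
  have hBsym : ∀ a b, B b a = B a b := by
    intro a b
    have h2 := congrFun (congrFun hBpsd.isHermitian.eq b) a
    simpa [conjTranspose_apply] using h2.symm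
  -- index embedding
  set g : Fin r → Fin n := Fin.castLE hrn.le with hg
  set V : Matrix (Fin n) (Fin r) ℝ := Q.submatrix id g with hV
  have hVtV : Vᵀ * V = 1 := by
    ext j k
    have h := congrFun (congrFun hQO (g j)) (g k)
    simp only [Matrix.mul_apply, transpose_apply, Matrix.one_apply] at h ⊢
    simp only [hV, Matrix.submatrix_apply, id]
    rw [h]
    simp [hg, (Fin.castLE_injective hrn.le).eq_iff]
  -- eigDesc values
  have hrev1 : (⟨n - r, by omega⟩ : Fin n).rev = ⟨r - 1, by omega⟩ := by
    ext; rw [Fin.val_rev]; simp; omega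
  have hrev2 : (⟨n - r - 1, by omega⟩ : Fin n).rev = ⟨r, by omega⟩ := by
    ext; rw [Fin.val_rev]; simp; omega
  have hED1 : eigDesc hY ⟨n - r, by omega⟩ = d ⟨r - 1, by omega⟩ := by
    simp only [eigDesc, hrev1]; rfl
  have hED2 : eigDesc hY ⟨n - r - 1, by omega⟩ = d ⟨r, by omega⟩ := by
    simp only [eigDesc, hrev2]; rfl
  -- filter sets
  obtain ⟨P, hP⟩ : ∃ P : Finset (Fin n), P = Finset.univ.filter (fun i => i.val < r) :=
    ⟨_, rfl⟩
  obtain ⟨Pc, hPc⟩ : ∃ Pc : Finset (Fin n), Pc = Finset.univ.filter (fun i => ¬ i.val < r) :=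
    ⟨_, rfl⟩
  have hsumg : ∀ f : Fin n → ℝ, ∑ j : Fin r, f (g j) = ∑ i ∈ P, f i := by
    intro f; rw [hP]; exact sum_castLE (by omega) hrn.le f
  have hsplit : ∀ f : Fin n → ℝ, ∑ i ∈ P, f i + ∑ i ∈ Pc, f i = ∑ i : Fin n, f i := by
    intro f; rw [hP, hPc]; exact Finset.sum_filter_add_sum_filter_not Finset.univ _ f
  obtain ⟨s, hs⟩ : ∃ s : ℝ, s = ∑ j : Fin r, B (g j) (g j) := ⟨_, rfl⟩
  obtain ⟨t, hts⟩ : ∃ t : ℝ, t = 1 - s := ⟨_, rfl⟩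
  have htrB : ∑ i : Fin n, B i i = 1 := by
    simpa [Matrix.trace, Matrix.diag] using hBtr
  have htPc : ∑ i ∈ Pc, B i i = t := by
    have h1 := hsplit (fun i => B i i)
    rw [← hsumg (fun i => B i i)] at h1
    rw [htrB] at h1
    rw [hts, ← h1, hs]; ring
  have ht0 : 0 ≤ t := by
    rw [← htPc]
    exact Finset.sum_nonneg fun i _ => psd_diag_nonneg hBpsd i
  have hs0 : 0 ≤ s := by
    rw [hs]; exact Finset.sum_nonneg fun j _ => psd_diag_nonneg hBpsd (g j)
  have ht1 : t ≤ 1 := by rw [hts]; linarith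
  obtain ⟨c, hc⟩ : ∃ c : ℝ, c = t / r := ⟨_, rfl⟩
  have hc0 : 0 ≤ c := by rw [hc]; positivity
  -- the matrix S
  obtain ⟨S, hS⟩ : ∃ S : Matrix (Fin r) (Fin r) ℝ, S = Vᵀ * X * V + diagonal (fun _ => c) :=
    ⟨_, rfl⟩
  have hSsub : ∀ j k, (Vᵀ * X * V) j k = B (g j) (g k) := by
    intro j k
    simp only [hV, hB, Matrix.mul_apply, transpose_apply, submatrix_apply, id]
  have hSpsd : S.PosSemidef := by
    have h1 : (Vᵀ * X * V).PosSemidef := by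
      have := hX.conjTranspose_mul_mul_same V
      rwa [hct] at this
    rw [hS]; exact h1.add (PosSemidef.diagonal fun _ => hc0)
  have hStr : S.trace = 1 := by
    have h1 : S.trace = ∑ j : Fin r, (B (g j) (g j) + c) := by
      simp [Matrix.trace, Matrix.diag, hS, hSsub]
    rw [h1, Finset.sum_add_distrib]
    simp only [Finset.sum_const, Finset.card_univ, Fintype.card_fin, nsmul_eq_mul]
    rw [← hs, hc]
    have : (r:ℝ) ≠ 0 := by positivity
    field_simp
    linarith
  -- symmetry of S
  have hSsym : Sᵀ = S := by rw [← hct]; exact hSpsd.isHermitian.eq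
  have Sjj : ∀ j, S j j = B (g j) (g j) + c := by
    intro j
    rw [hS, Matrix.add_apply, hSsub, Matrix.diagonal_apply_eq]
  refine ⟨V, S, hVtV, ?_, hSpsd, hStr, ?_⟩
  · -- eigenvector columns
    intro j
    refine ⟨d (g j), ?_, ?_⟩
    · rw [hED1]
      apply dmono
      show (g j) ≤ (⟨r - 1, by omega⟩ : Fin n)
      rw [Fin.le_def]
      have := j.isLt
      simp only [hg, Fin.coe_castLE]
      omega
    · exact hEV (g j)
  -- the inequality
  obtain ⟨W, hW⟩ : ∃ W : Matrix (Fin n) (Fin n) ℝ, W = V * S * Vᵀ := ⟨_, rfl⟩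
  rw [← hW]
  have hWsym : Wᵀ = W := by
    rw [hW]
    simp [Matrix.transpose_mul, hSsym, Matrix.mul_assoc]
  -- trace of (X - W) * Y
  have hXY : (X * Y).trace = ∑ i : Fin n, B i i * d i := by
    rw [hYspec]
    have h1 : X * (Q * diagonal d * Qᵀ) = (X * Q * diagonal d) * Qᵀ := by
      simp [Matrix.mul_assoc]
    rw [h1, Matrix.trace_mul_comm]
    have h2 : Qᵀ * (X * Q * diagonal d) = B * diagonal d := by
      rw [hB]; simp [Matrix.mul_assoc]
    rw [h2]
    simp [Matrix.trace, Matrix.diag, Matrix.mul_diagonal]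
  have hYV : Y * V = V * diagonal (fun j => d (g j)) := by
    ext i j
    have h := congrFun (congrFun hYQ i) (g j)
    rw [Matrix.mul_diagonal] at h
    rw [Matrix.mul_diagonal]
    simpa [hV, Matrix.mul_apply] using h
  have hWY : (W * Y).trace = ∑ j : Fin r, S j j * d (g j) := by
    have h1 : W * Y = V * (S * (Vᵀ * Y)) := by rw [hW]; simp [Matrix.mul_assoc]
    rw [h1, Matrix.trace_mul_comm]
    have h2 : S * (Vᵀ * Y) * V = S * diagonal (fun j => d (g j)) := by
      rw [Matrix.mul_assoc, Matrix.mul_assoc, hYV, ← Matrix.mul_assoc Vᵀ V, hVtV,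
        Matrix.one_mul]
    rw [h2]
    simp [Matrix.trace, Matrix.diag, Matrix.mul_diagonal]
  have htrace : ((X - W)ᵀ * Y).trace
      = ∑ i : Fin n, B i i * d i - ∑ j : Fin r, S j j * d (g j) := by
    rw [Matrix.transpose_sub, hXsym, hWsym, Matrix.sub_mul, Matrix.trace_sub, hXY, hWY]
  -- lower bound on trace
  have hgap' : δ ≤ d ⟨r, hrn⟩ - d ⟨r - 1, by omega⟩ := by
    rw [hED1, hED2] at hgap; exact hgap
  have htr_ge : t * δ ≤ ((X - W)ᵀ * Y).trace := by
    rw [htrace]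
    have hsplit1 := hsplit (fun i => B i i * d i)
    have hsum1 : ∑ j : Fin r, S j j * d (g j)
        = ∑ i ∈ P, B i i * d i + ∑ j : Fin r, c * d (g j) := by
      have : ∀ j : Fin r, S j j * d (g j) = B (g j) (g j) * d (g j) + c * d (g j) := by
        intro j; rw [Sjj]; ring
      rw [Finset.sum_congr rfl fun j _ => this j, Finset.sum_add_distrib,
        hsumg (fun i => B i i * d i)]
    have hPc_ge : d ⟨r, hrn⟩ * t ≤ ∑ i ∈ Pc, B i i * d i := by
      rw [← htPc, Finset.mul_sum]
      refine Finset.sum_le_sum fun i hi => ?_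
      have hiv : ¬ (i : ℕ) < r := by
        rw [hPc] at hi; simpa using hi
      have hdi : d ⟨r, hrn⟩ ≤ d i := by
        apply dmono; rw [Fin.le_def]; simp only [Fin.val_mk]; omega
      have hBi := psd_diag_nonneg hBpsd i
      nlinarith
    have hcd_le : ∑ j : Fin r, c * d (g j) ≤ t * d ⟨r - 1, by omega⟩ := by
      have hstep : ∀ j : Fin r, c * d (g j) ≤ c * d ⟨r - 1, by omega⟩ := by
        intro j
        have : d (g j) ≤ d ⟨r - 1, by omega⟩ := by
          apply dmono; rw [Fin.le_def]
          have := j.isLt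
          simp only [hg, Fin.coe_castLE]; omega
        nlinarith
      calc ∑ j : Fin r, c * d (g j) ≤ ∑ _j : Fin r, c * d ⟨r - 1, by omega⟩ :=
            Finset.sum_le_sum fun j _ => hstep j
        _ = r * (c * d ⟨r - 1, by omega⟩) := by
            simp [Finset.sum_const, Finset.card_univ, mul_comm]
        _ = t * d ⟨r - 1, by omega⟩ := by
            rw [hc]
            have : (r:ℝ) ≠ 0 := by positivity
            field_simp
    rw [hsum1, ← hsplit1]
    have : ∑ i ∈ P, B i i * d i + ∑ i ∈ Pc, B i i * d i
        - (∑ i ∈ P, B i i * d i + ∑ j : Fin r, c * d (g j))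
        = ∑ i ∈ Pc, B i i * d i - ∑ j : Fin r, c * d (g j) := by ring
    rw [this]
    nlinarith
  -- Frobenius norm part
  obtain ⟨N, hN⟩ : ∃ N : Matrix (Fin n) (Fin n) ℝ, N = Qᵀ * (X - W) * Q := ⟨_, rfl⟩
  have hfrobN : frob (X - W) ^ 2 = ∑ a : Fin n, ∑ b : Fin n, (N b a)^2 := by
    rw [frob_sq, ← trace_sq, ← conj_trace_eq Q (X - W) hQQt, ← hN, trace_sq]
  obtain ⟨EZ, hEZ⟩ : ∃ EZ : Matrix (Fin n) (Fin n) ℝ, EZ = Qᵀ * W * Q := ⟨_, rfl⟩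
  have hNab : ∀ a b, N a b = B a b - EZ a b := by
    intro a b
    rw [hN, hEZ, hB]
    rw [Matrix.mul_sub, Matrix.sub_mul]
    simp [Matrix.sub_apply]
  -- structure of EZ
  have hQtV : ∀ (a : Fin n) (j : Fin r), (Qᵀ * V) a j = if a = g j then 1 else 0 := by
    intro a j
    have h := congrFun (congrFun hQO a) (g j)
    simp only [Matrix.mul_apply, transpose_apply, Matrix.one_apply] at h
    simp only [hV, Matrix.mul_apply, transpose_apply, Matrix.submatrix_apply, id]
    exact h
  obtain ⟨E, hE⟩ : ∃ E : Matrix (Fin n) (Fin r) ℝ, E = Qᵀ * V := ⟨_, rfl⟩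
  have hEapp : ∀ (a : Fin n) (j : Fin r), E a j = if a = g j then 1 else 0 := by
    intro a j; rw [hE]; exact hQtV a j
  have hEZapply : ∀ a b, EZ a b = ∑ k : Fin r, ∑ j : Fin r,
      (if a = g j then 1 else 0) * S j k * (if b = g k then 1 else 0) := by
    intro a b
    rw [hEZ, hW]
    have h1 : Qᵀ * (V * S * Vᵀ) * Q = E * S * Eᵀ := by
      rw [hE, Matrix.transpose_mul, Matrix.transpose_transpose]
      simp [Matrix.mul_assoc]
    rw [h1]
    simp only [Matrix.mul_apply, transpose_apply, Finset.sum_mul]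
    refine Finset.sum_congr rfl fun k _ => Finset.sum_congr rfl fun j _ => ?_
    rw [hEapp, hEapp]
  have hEZg : ∀ j k : Fin r, EZ (g j) (g k) = S j k := by
    intro j k
    have hgeq : ∀ (x y : Fin r), (g x = g y) = (x = y) :=
      fun x y => propext (Fin.castLE_injective hrn.le).eq_iff
    rw [hEZapply]
    simp [hgeq, Finset.sum_ite_eq]
  have hEZ0 : ∀ a b : Fin n, (¬ (a:ℕ) < r ∨ ¬ (b:ℕ) < r) → EZ a b = 0 := by
    intro a b hab
    rw [hEZapply]
    refine Finset.sum_eq_zero fun k _ => Finset.sum_eq_zero fun j _ => ?_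
    rcases hab with h | h
    · have : a ≠ g j := by
        intro hh; apply h; rw [hh, hg]; simp
      simp [this]
    · have : b ≠ g k := by
        intro hh; apply h; rw [hh, hg]; simp
      simp [this]
  have hsP : ∑ i ∈ P, B i i = s := by rw [← hsumg (fun i => B i i), hs]
  have key : ∑ a : Fin n, ∑ b : Fin n, (N b a)^2
      = (∑ a ∈ P, ∑ b ∈ P, (N b a)^2) + (∑ a ∈ P, ∑ b ∈ Pc, (N b a)^2)
      + ((∑ a ∈ Pc, ∑ b ∈ P, (N b a)^2) + (∑ a ∈ Pc, ∑ b ∈ Pc, (N b a)^2)) := by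
    have h1 : ∀ T : Finset (Fin n), ∑ a ∈ T, (∑ b : Fin n, (N b a)^2)
        = ∑ a ∈ T, ∑ b ∈ P, (N b a)^2 + ∑ a ∈ T, ∑ b ∈ Pc, (N b a)^2 := by
      intro T
      rw [← Finset.sum_add_distrib]
      exact Finset.sum_congr rfl fun a _ => (hsplit _).symm
    rw [← hsplit (fun a => ∑ b : Fin n, (N b a)^2), h1 P, h1 Pc]
  -- block PP
  have hNg : ∀ j k : Fin r, N (g k) (g j) = -(if k = j then c else 0) := by
    intro j k
    rw [hNab, hEZg, hS, Matrix.add_apply, hSsub, Matrix.diagonal_apply]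
    ring
  have b1 : ∑ a ∈ P, ∑ b ∈ P, (N b a)^2 = (r:ℝ) * c^2 := by
    have h2 : ∑ a ∈ P, ∑ b ∈ P, (N b a)^2
        = ∑ j : Fin r, ∑ k : Fin r, (N (g k) (g j))^2 := by
      rw [← hsumg (fun a => ∑ b ∈ P, (N b a)^2)]
      exact Finset.sum_congr rfl fun j _ => (hsumg (fun b => (N b (g j))^2)).symm
    rw [h2]
    have h3 : ∀ j : Fin r, ∑ k : Fin r, (N (g k) (g j))^2 = c^2 := by
      intro j
      have : ∀ k : Fin r, (N (g k) (g j))^2 = (if k = j then c^2 else 0) := by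
        intro k
        rw [hNg]
        by_cases h : k = j <;> simp [h]
      rw [Finset.sum_congr rfl fun k _ => this k]
      simp
    rw [Finset.sum_congr rfl fun j _ => h3 j]
    simp [mul_comm]
  have b1le : (r:ℝ) * c^2 ≤ t^2 := by
    have hrr : (1:ℝ) ≤ (r:ℝ) := by exact_mod_cast hr
    have hr0 : (r:ℝ) ≠ 0 := by positivity
    have : (r:ℝ) * c^2 = t^2 / r := by rw [hc]; field_simp
    rw [this]
    exact div_le_self (sq_nonneg t) hrr
  have b2 : ∑ a ∈ P, ∑ b ∈ Pc, (N b a)^2 ≤ t * s := by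
    have hstep : ∀ a ∈ P, ∑ b ∈ Pc, (N b a)^2 ≤ t * B a a := by
      intro a _
      have h4 : ∀ b ∈ Pc, (N b a)^2 ≤ B b b * B a a := by
        intro b hb
        have hbr : ¬ (b:ℕ) < r := by rw [hPc] at hb; simpa using hb
        rw [hNab, hEZ0 b a (Or.inl hbr), sub_zero]
        exact psd_entry_sq_le hBpsd b a
      calc ∑ b ∈ Pc, (N b a)^2 ≤ ∑ b ∈ Pc, B b b * B a a := Finset.sum_le_sum h4
        _ = t * B a a := by rw [← Finset.sum_mul, htPc]
    calc ∑ a ∈ P, ∑ b ∈ Pc, (N b a)^2 ≤ ∑ a ∈ P, t * B a a := Finset.sum_le_sum hstep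
      _ = t * s := by rw [← Finset.mul_sum, hsP]
  have b3 : ∑ a ∈ Pc, ∑ b ∈ P, (N b a)^2 ≤ s * t := by
    have hstep : ∀ a ∈ Pc, ∑ b ∈ P, (N b a)^2 ≤ s * B a a := by
      intro a ha
      have har : ¬ (a:ℕ) < r := by rw [hPc] at ha; simpa using ha
      have h4 : ∀ b ∈ P, (N b a)^2 ≤ B b b * B a a := by
        intro b _
        rw [hNab, hEZ0 b a (Or.inr har), sub_zero]
        exact psd_entry_sq_le hBpsd b a
      calc ∑ b ∈ P, (N b a)^2 ≤ ∑ b ∈ P, B b b * B a a := Finset.sum_le_sum h4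
        _ = s * B a a := by rw [← Finset.sum_mul, hsP]
    calc ∑ a ∈ Pc, ∑ b ∈ P, (N b a)^2 ≤ ∑ a ∈ Pc, s * B a a := Finset.sum_le_sum hstep
      _ = s * t := by rw [← Finset.mul_sum, htPc]
  have b4 : ∑ a ∈ Pc, ∑ b ∈ Pc, (N b a)^2 ≤ t * t := by
    have hstep : ∀ a ∈ Pc, ∑ b ∈ Pc, (N b a)^2 ≤ t * B a a := by
      intro a _
      have h4 : ∀ b ∈ Pc, (N b a)^2 ≤ B b b * B a a := by
        intro b hb
        have hbr : ¬ (b:ℕ) < r := by rw [hPc] at hb; simpa using hb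
        rw [hNab, hEZ0 b a (Or.inl hbr), sub_zero]
        exact psd_entry_sq_le hBpsd b a
      calc ∑ b ∈ Pc, (N b a)^2 ≤ ∑ b ∈ Pc, B b b * B a a := Finset.sum_le_sum h4
        _ = t * B a a := by rw [← Finset.sum_mul, htPc]
    calc ∑ a ∈ Pc, ∑ b ∈ Pc, (N b a)^2 ≤ ∑ a ∈ Pc, t * B a a := Finset.sum_le_sum hstep
      _ = t * t := by rw [← Finset.mul_sum, htPc]
  have hfle : frob (X - W)^2 ≤ 2 * t := by
    rw [hfrobN, key, b1]
    have hst : s + t = 1 := by rw [hts]; ring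
    have hid : t^2 + t*s + (s*t + t*t) = 2*t := by linear_combination 2*t*hst
    linarith [b1le, b2, b3, b4]
  calc (δ/2) * frob (X - W)^2 ≤ (δ/2) * (2*t) := by
        apply mul_le_mul_of_nonneg_left hfle
        positivity
    _ = t * δ := by ring
    _ ≤ _ := htr_ge
end

section
/- Let g : ℝ^m → ℝ be α-strongly convex and differentiable, A : 𝕊^n → ℝ^m linear, C ∈ 𝕊^n symmetric, and f(X) = g(A X) + ⟨C, X⟩. Suppose X⋆ is optimal for minimizing f over the spectrahedron, with KKT dual certificate (Z⋆, s⋆) satisfying A*(∇g)(A X⋆) + C − Z⋆ − s⋆ I = 0, ⟨Z⋆, X⋆⟩ = 0, Z⋆ ⪰ 0. Then for every feasible X (X ⪰ 0, trace X = 1): f(X) − f(X⋆) ≥ ⟨Z⋆, X⟩ + (α/2)‖A(X − X⋆)‖₂² ≥ 0. -/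
open Matrix


lemma psd_trace_nonneg {k : Type*} [Fintype k] [DecidableEq k] {M : Matrix k k ℝ} (h : M.PosSemidef) :
    0 ≤ M.trace := by
  apply Finset.sum_nonneg
  intro i _
  exact h.diag_nonneg

lemma trace_mul_psd_nonneg {k : Type*} [Fintype k] [DecidableEq k]
    {M N : Matrix k k ℝ} (hM : M.PosSemidef) (hN : N.PosSemidef) :
    0 ≤ (Mᵀ * N).trace := by
  obtain ⟨B, rfl⟩ : ∃ B : Matrix k k ℝ, N = Bᴴ * B := by
    open scoped MatrixOrder in exact CStarAlgebra.nonneg_iff_eq_star_mul_self.mp hN.nonneg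
  have hMt : Mᵀ = M := hM.1
  rw [hMt]
  have : (M * (Bᴴ * B)).trace = (B * M * Bᴴ).trace := by
    rw [← Matrix.mul_assoc, Matrix.trace_mul_cycle, Matrix.mul_assoc]
  rw [this]
  exact psd_trace_nonneg (hM.mul_mul_conjTranspose_same B)



/-- For `f(X) = g(𝒜X) + ⟨C, X⟩` with `g` `α`-strongly convex and KKT certificate
`(Z⋆, s⋆)`: for every feasible `X`,
`f(X) - f(X⋆) ≥ ⟨Z⋆, X⟩ + (α/2)‖𝒜(X - X⋆)‖₂² ≥ 0`. -/
theorem stmt_10 {n m : ℕ} (g : (Fin m → ℝ) → ℝ)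
    (gradg : (Fin m → ℝ) → (Fin m → ℝ)) (α : ℝ) (hα : 0 < α)
    (hsc : ∀ x y : Fin m → ℝ,
      g x + gradg x ⬝ᵥ (y - x) + α / 2 * ((y - x) ⬝ᵥ (y - x)) ≤ g y)
    (A : Matrix (Fin n) (Fin n) ℝ →ₗ[ℝ] (Fin m → ℝ))
    (Astar : (Fin m → ℝ) →ₗ[ℝ] Matrix (Fin n) (Fin n) ℝ)
    (hadj : ∀ (y : Fin m → ℝ) (X : Matrix (Fin n) (Fin n) ℝ),
      A X ⬝ᵥ y = ((Astar y)ᵀ * X).trace)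
    (C Xs Zs : Matrix (Fin n) (Fin n) ℝ) (s : ℝ) (hC : C.IsHermitian)
    (f : Matrix (Fin n) (Fin n) ℝ → ℝ)
    (hf : ∀ X, f X = g (A X) + (Cᵀ * X).trace)
    (hXs : Xs.PosSemidef) (hXstr : Xs.trace = 1)
    (hKKT1 : Astar (gradg (A Xs)) + C - Zs - s • (1 : Matrix (Fin n) (Fin n) ℝ) = 0)
    (hKKT2 : (Zsᵀ * Xs).trace = 0) (hZs : Zs.PosSemidef) :
    ∀ X : Matrix (Fin n) (Fin n) ℝ, X.PosSemidef → X.trace = 1 →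
      (Zsᵀ * X).trace + α / 2 * ((A X - A Xs) ⬝ᵥ (A X - A Xs)) ≤ f X - f Xs ∧
        0 ≤ (Zsᵀ * X).trace + α / 2 * ((A X - A Xs) ⬝ᵥ (A X - A Xs)) := by
  intro X hX hXtr
  have hA1 : Astar (gradg (A Xs)) = Zs + s • (1 : Matrix (Fin n) (Fin n) ℝ) - C := by
    have h : Astar (gradg (A Xs)) - (Zs + s • (1 : Matrix (Fin n) (Fin n) ℝ) - C) = 0 := by
      rw [← hKKT1]; abel
    exact sub_eq_zero.mp h
  have hdiff : A X - A Xs = A (X - Xs) := (map_sub A X Xs).symm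
  have key : gradg (A Xs) ⬝ᵥ (A X - A Xs) = (Zsᵀ * X).trace - ((Cᵀ * X).trace - (Cᵀ * Xs).trace) := by
    rw [hdiff, dotProduct_comm, hadj, hA1]
    rw [Matrix.mul_sub]
    simp only [Matrix.transpose_add, Matrix.transpose_sub, Matrix.transpose_smul,
      Matrix.transpose_one, Matrix.add_mul, Matrix.sub_mul, Matrix.smul_mul, Matrix.one_mul,
      Matrix.trace_sub, Matrix.trace_add, Matrix.trace_smul, hKKT2, hXstr, hXtr]
    simp only [smul_eq_mul, mul_one]
    ring
  have hg := hsc (A Xs) (A X)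
  have hdot : 0 ≤ (A X - A Xs) ⬝ᵥ (A X - A Xs) := by
    apply Finset.sum_nonneg; intro i _; exact mul_self_nonneg _
  constructor
  · rw [hf X, hf Xs]
    have := hg
    rw [key] at this
    nlinarith [this]
  · have hZX : 0 ≤ (Zsᵀ * X).trace := trace_mul_psd_nonneg hZs hX
    nlinarith
end

section
/- Under the setting of the previous inequality (f(X) − f(X⋆) ≥ ⟨Z⋆, X⟩ + (α/2)‖A(X−X⋆)‖₂² for feasible X), a feasible matrix X is optimal for minimizing f over the spectrahedron if and only if ⟨Z⋆, X⟩ = 0 and A X = A X⋆. -/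
open Matrix

lemma trace_nonneg_of_psd {n : ℕ} {M : Matrix (Fin n) (Fin n) ℝ}
    (hM : M.PosSemidef) : 0 ≤ M.trace := by
  rw [Matrix.trace]
  refine Finset.sum_nonneg fun i _ => ?_
  have := hM.dotProduct_mulVec_nonneg (Pi.single i 1)
  simpa [dotProduct, Matrix.mulVec, Pi.single_apply, Finset.mul_sum] using this

open scoped MatrixOrder in
lemma trace_mul_nonneg_of_psd {n : ℕ} {P Q : Matrix (Fin n) (Fin n) ℝ}
    (hP : P.PosSemidef) (hQ : Q.PosSemidef) : 0 ≤ (P * Q).trace := by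
  have h1 : P * Q = CFC.sqrt P * (CFC.sqrt P * Q) := by
    rw [← mul_assoc, CFC.sqrt_mul_sqrt_self P hP.nonneg]
  rw [h1, Matrix.trace_mul_comm]
  have h2 : (CFC.sqrt P * Q * (CFC.sqrt P)ᴴ).PosSemidef := hQ.mul_mul_conjTranspose_same (CFC.sqrt P)
  rw [(CFC.sqrt_nonneg P).posSemidef.isHermitian.eq] at h2
  simpa [mul_assoc] using trace_nonneg_of_psd h2

/-- Optimality characterization: under the strongly convex setting with KKT
certificate, a feasible `X` is optimal iff `⟨Z⋆, X⟩ = 0` and `𝒜X = 𝒜X⋆`. -/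
theorem stmt_11 {n m : ℕ} (g : (Fin m → ℝ) → ℝ)
    (gradg : (Fin m → ℝ) → (Fin m → ℝ)) (α : ℝ) (hα : 0 < α)
    (hsc : ∀ x y : Fin m → ℝ,
      g x + gradg x ⬝ᵥ (y - x) + α / 2 * ((y - x) ⬝ᵥ (y - x)) ≤ g y)
    (A : Matrix (Fin n) (Fin n) ℝ →ₗ[ℝ] (Fin m → ℝ))
    (Astar : (Fin m → ℝ) →ₗ[ℝ] Matrix (Fin n) (Fin n) ℝ)
    (hadj : ∀ (y : Fin m → ℝ) (X : Matrix (Fin n) (Fin n) ℝ),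
      A X ⬝ᵥ y = ((Astar y)ᵀ * X).trace)
    (C Xs Zs : Matrix (Fin n) (Fin n) ℝ) (s : ℝ) (hC : C.IsHermitian)
    (f : Matrix (Fin n) (Fin n) ℝ → ℝ)
    (hf : ∀ X, f X = g (A X) + (Cᵀ * X).trace)
    (hXs : Xs.PosSemidef) (hXstr : Xs.trace = 1)
    (hopt : ∀ Y : Matrix (Fin n) (Fin n) ℝ, Y.PosSemidef → Y.trace = 1 → f Xs ≤ f Y)
    (hKKT1 : Astar (gradg (A Xs)) + C - Zs - s • (1 : Matrix (Fin n) (Fin n) ℝ) = 0)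
    (hKKT2 : (Zsᵀ * Xs).trace = 0) (hZs : Zs.PosSemidef) :
    ∀ X : Matrix (Fin n) (Fin n) ℝ, X.PosSemidef → X.trace = 1 →
      ((∀ Y : Matrix (Fin n) (Fin n) ℝ, Y.PosSemidef → Y.trace = 1 → f X ≤ f Y) ↔
        (Zsᵀ * X).trace = 0 ∧ A X = A Xs) := by
  intro X hXpsd hXtr
  have hCval : C = Zs + s • (1 : Matrix (Fin n) (Fin n) ℝ) - Astar (gradg (A Xs)) := by
    have := hKKT1
    linear_combination (norm := abel_nf) hKKT1
  -- key formula for f on feasible matrices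
  have key : ∀ Y : Matrix (Fin n) (Fin n) ℝ, Y.trace = 1 →
      f Y = g (A Y) + (Zsᵀ * Y).trace + s - gradg (A Xs) ⬝ᵥ A Y := by
    intro Y hYtr
    rw [hf, hCval]
    have hA : ((Zs + s • (1 : Matrix (Fin n) (Fin n) ℝ) - Astar (gradg (A Xs)))ᵀ * Y).trace
        = (Zsᵀ * Y).trace + s * Y.trace - ((Astar (gradg (A Xs)))ᵀ * Y).trace := by
      simp [Matrix.transpose_add, Matrix.transpose_sub, Matrix.add_mul, Matrix.sub_mul,
        Matrix.trace_add, Matrix.trace_sub, Matrix.smul_mul, Matrix.trace_smul]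
    rw [hA, hYtr, ← hadj]
    have : A Y ⬝ᵥ gradg (A Xs) = gradg (A Xs) ⬝ᵥ A Y := dotProduct_comm _ _
    rw [this]; ring
  have keyX := key X hXtr
  have keyXs := key Xs hXstr
  -- main inequality: f X - f Xs ≥ ⟨Zs, X⟩ + α/2 ‖A X - A Xs‖²
  set δ : Fin m → ℝ := A X - A Xs with hδ
  have hineq : (Zsᵀ * X).trace + α / 2 * (δ ⬝ᵥ δ) ≤ f X - f Xs := by
    have h := hsc (A Xs) (A X)
    rw [keyX, keyXs, hKKT2]
    have hdot : gradg (A Xs) ⬝ᵥ A X - gradg (A Xs) ⬝ᵥ A Xs = gradg (A Xs) ⬝ᵥ δ := by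
      rw [hδ, dotProduct_sub]
    nlinarith [h]
  have hZX : 0 ≤ (Zsᵀ * X).trace := by
    have hZt : Zsᵀ = Zs := by
      rw [← Matrix.conjTranspose_eq_transpose_of_trivial, hZs.isHermitian.eq]
    rw [hZt]; exact trace_mul_nonneg_of_psd hZs hXpsd
  have hδδ : 0 ≤ δ ⬝ᵥ δ := by
    refine Finset.sum_nonneg fun i _ => mul_self_nonneg _
  constructor
  · intro hXopt
    have hfe : f X = f Xs := le_antisymm (hXopt Xs hXs hXstr) (hopt X hXpsd hXtr)
    have h0 : (Zsᵀ * X).trace + α / 2 * (δ ⬝ᵥ δ) ≤ 0 := by rw [hfe] at hineq; linarith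
    have htr0 : (Zsᵀ * X).trace = 0 := by nlinarith
    have hd0 : δ ⬝ᵥ δ = 0 := by nlinarith
    have : δ = 0 := dotProduct_self_eq_zero.mp hd0
    exact ⟨htr0, sub_eq_zero.mp this⟩
  · rintro ⟨htr0, hAX⟩
    have hfe : f X = f Xs := by rw [keyX, keyXs, htr0, hKKT2, hAX]
    intro Y hY1 hY2
    rw [hfe]; exact hopt Y hY1 hY2
end

section
/- Let Z⋆ be an n×n symmetric PSD matrix with rank n−1 and null space spanned by a unit vector v. Then for any X ⪰ 0 with trace(X) = 1, we have ‖X − vv^⊤‖_F² ≤ 2(1 − v^⊤Xv) ≤ 2·⟨Z⋆, X⟩/λ_{n−1}(Z⋆). -/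
open Matrix

lemma aux_diag_nonneg {n : ℕ} {A : Matrix (Fin n) (Fin n) ℝ} (hA : A.PosSemidef) (i : Fin n) :
    0 ≤ A i i := by
  have := hA.dotProduct_mulVec_nonneg (Pi.single i 1)
  simpa [dotProduct, mulVec, Pi.single_apply, Finset.sum_ite_eq] using this

lemma aux_trace_nonneg {n : ℕ} {A : Matrix (Fin n) (Fin n) ℝ} (hA : A.PosSemidef) :
    0 ≤ A.trace :=
  Finset.sum_nonneg fun i _ => aux_diag_nonneg hA i

open scoped MatrixOrder in
lemma aux_trace_mul_nonneg {n : ℕ} {A B : Matrix (Fin n) (Fin n) ℝ}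
    (hA : A.PosSemidef) (hB : B.PosSemidef) : 0 ≤ (A * B).trace := by
  obtain ⟨C, rfl⟩ := CStarAlgebra.nonneg_iff_eq_star_mul_self.mp hA.nonneg
  rw [Matrix.mul_assoc, Matrix.trace_mul_comm]
  exact aux_trace_nonneg (hB.mul_mul_conjTranspose_same C)

lemma aux_trace_vecMulVec_mul {n : ℕ} (a b : Fin n → ℝ) (X : Matrix (Fin n) (Fin n) ℝ) :
    (vecMulVec a b * X).trace = b ⬝ᵥ (X *ᵥ a) := by
  simp only [Matrix.trace, Matrix.diag, Matrix.mul_apply, vecMulVec_apply, dotProduct, mulVec,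
    Finset.mul_sum]
  rw [Finset.sum_comm]
  exact Finset.sum_congr rfl fun k _ => Finset.sum_congr rfl fun i _ => by ring

lemma aux_quadform_eig {n : ℕ} {A : Matrix (Fin n) (Fin n) ℝ} (hA : A.IsHermitian)
    (x : Fin n → ℝ) :
    x ⬝ᵥ (A *ᵥ x) =
      ∑ i, hA.eigenvalues i *
        ((star (hA.eigenvectorUnitary : Matrix (Fin n) (Fin n) ℝ) *ᵥ x) i)^2 := by
  set U : Matrix (Fin n) (Fin n) ℝ := (hA.eigenvectorUnitary : Matrix (Fin n) (Fin n) ℝ) with hU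
  set y := star U *ᵥ x with hy
  conv_lhs => rw [hA.spectral_theorem, Unitary.conjStarAlgAut_apply, ← hU]
  rw [← Matrix.mulVec_mulVec, ← Matrix.mulVec_mulVec, dotProduct_mulVec, ← hy]
  have hvm : x ᵥ* U = y := by
    rw [hy, Matrix.star_eq_conjTranspose, Matrix.conjTranspose_eq_transpose_of_trivial,
      Matrix.mulVec_transpose]
  rw [hvm]
  simp [Matrix.mulVec_diagonal, dotProduct, pow_two, mul_comm, mul_assoc, mul_left_comm]

lemma aux_norm_pres {n : ℕ} {A : Matrix (Fin n) (Fin n) ℝ} (hA : A.IsHermitian)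
    (x : Fin n → ℝ) :
    x ⬝ᵥ x =
      ∑ i, ((star (hA.eigenvectorUnitary : Matrix (Fin n) (Fin n) ℝ) *ᵥ x) i)^2 := by
  set U : Matrix (Fin n) (Fin n) ℝ := (hA.eigenvectorUnitary : Matrix (Fin n) (Fin n) ℝ) with hU
  set y := star U *ᵥ x with hy
  have h1 : ∑ i, (y i)^2 = y ⬝ᵥ y := by simp [dotProduct, pow_two]
  rw [h1, hy, dotProduct_mulVec]
  have hvm : (star U *ᵥ x) ᵥ* star U = x ᵥ* (U * star U) := by
    rw [Matrix.star_eq_conjTranspose, Matrix.conjTranspose_eq_transpose_of_trivial,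
      Matrix.mulVec_transpose, Matrix.vecMul_vecMul]
  rw [hvm, (Matrix.mem_unitaryGroup_iff).mp hA.eigenvectorUnitary.2, Matrix.vecMul_one]

lemma aux_entry_sq_le {n : ℕ} {X : Matrix (Fin n) (Fin n) ℝ} (hX : X.PosSemidef) (i j : Fin n) :
    X i j ^ 2 ≤ X i i * X j j := by
  have q : ∀ a b : ℝ, 0 ≤ a^2 * X i i + a*b*(X i j + X j i) + b^2 * X j j := by
    intro a b
    have h0 := hX.dotProduct_mulVec_nonneg ((fun k => a * (Pi.single i 1 : Fin n → ℝ) k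
      + b * (Pi.single j 1 : Fin n → ℝ) k) : Fin n → ℝ)
    simp only [star_trivial] at h0
    calc (0:ℝ) ≤ _ := h0
      _ = a^2 * X i i + a*b*(X i j + X j i) + b^2 * X j j := by
        simp only [dotProduct, mulVec, Pi.single_apply,
          mul_ite, mul_one, mul_zero, Finset.sum_add_distrib, Finset.mul_sum, ite_mul, zero_mul,
          add_mul, mul_add, Finset.sum_ite_eq', Finset.mem_univ, if_true]
        ring
  have hsym : X i j = X j i := by
    have h := congrFun (congrFun hX.1 j) i
    simpa [Matrix.conjTranspose_apply] using h
  by_cases hjj : X j j = 0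
  · have hij : X i j = 0 := by
      by_contra h
      have h2 := q 1 (-(X i i + 1)/(2 * X i j))
      rw [← hsym, hjj] at h2
      have key : (1:ℝ)^2 * X i i + 1 * (-(X i i + 1)/(2 * X i j)) * (X i j + X i j)
          + (-(X i i + 1)/(2 * X i j))^2 * 0 = -1 := by
        field_simp
        ring
      rw [key] at h2
      linarith
    rw [hij]
    nlinarith [aux_diag_nonneg hX i, aux_diag_nonneg hX j]
  · have h3 := q (X j j) (-(X i j))
    rw [← hsym] at h3
    have hjj' : 0 < X j j := lt_of_le_of_ne (aux_diag_nonneg hX j) (Ne.symm hjj)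
    nlinarith [h3]

set_option maxHeartbeats 1000000 in
/-- If `Z⋆` is PSD of rank `n - 1` with null space spanned by a unit vector `v`,
then for any `X ⪰ 0` with `trace X = 1`:
`‖X - vvᵀ‖_F² ≤ 2(1 - vᵀXv) ≤ 2⟨Z⋆, X⟩/λ_{n-1}(Z⋆)`. -/
theorem stmt_13 {n : ℕ} (hn : 2 ≤ n)
    (Z : Matrix (Fin n) (Fin n) ℝ) (hZ : Z.PosSemidef) (hrank : Z.rank = n - 1)
    (v : Fin n → ℝ) (hv : v ⬝ᵥ v = 1)
    (hker : LinearMap.ker Z.mulVecLin = Submodule.span ℝ {v})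
    (X : Matrix (Fin n) (Fin n) ℝ) (hX : X.PosSemidef) (hXtr : X.trace = 1) :
    frob (X - Matrix.vecMulVec v v) ^ 2 ≤ 2 * (1 - v ⬝ᵥ (X *ᵥ v)) ∧
      2 * (1 - v ⬝ᵥ (X *ᵥ v)) ≤
        2 * (Zᵀ * X).trace / eigDesc hZ.isHermitian ⟨n - 2, by omega⟩ := by
  classical
  have hXsym : ∀ i j, X j i = X i j := by
    intro i j
    have h := congrFun (congrFun hX.1 i) j
    simpa [Matrix.conjTranspose_apply] using h
  set q : ℝ := v ⬝ᵥ (X *ᵥ v) with hqdef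
  set P : Matrix (Fin n) (Fin n) ℝ := Matrix.vecMulVec v v with hP
  have hPt : Pᵀ = P := by
    ext i j
    simp [hP, Matrix.transpose_apply, vecMulVec_apply, mul_comm]
  have hXt : Xᵀ = X := by
    ext i j
    simpa [Matrix.transpose_apply] using hXsym i j
  have htrPX : (P * X).trace = q := by rw [hP, aux_trace_vecMulVec_mul]
  have htrXP : (X * P).trace = q := by rw [Matrix.trace_mul_comm, htrPX]
  have hPv : P *ᵥ v = v := by
    funext i
    have h1 : (P *ᵥ v) i = v i * (v ⬝ᵥ v) := by
      simp [hP, mulVec, vecMulVec_apply, dotProduct, Finset.mul_sum, mul_assoc]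
    rw [h1, hv, mul_one]
  have htrPP : (P * P).trace = 1 := by
    rw [hP, aux_trace_vecMulVec_mul, ← hP, hPv, hv]
  constructor
  · -- Part 1
    set A : Matrix (Fin n) (Fin n) ℝ := X - P with hA
    have hAt : Aᵀ = A := by rw [hA, Matrix.transpose_sub, hPt, hXt]
    have hAA : A * A = X * X - X * P - P * X + P * P := by
      rw [hA]; noncomm_ring
    have htr : (Aᵀ * A).trace = (X * X).trace - 2 * q + 1 := by
      rw [hAt, hAA]
      simp only [Matrix.trace_add, Matrix.trace_sub, htrPX, htrXP, htrPP]
      ring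
    have hfrob : frob A ^ 2 = (Aᵀ * A).trace := by
      rw [frob, Real.sq_sqrt]
      rw [← Matrix.conjTranspose_eq_transpose_of_trivial]
      exact aux_trace_nonneg (Matrix.posSemidef_conjTranspose_mul_self A)
    have hXX : (X * X).trace ≤ 1 := by
      have h1 : (X * X).trace = ∑ i, ∑ j, X i j ^ 2 := by
        simp only [Matrix.trace, Matrix.diag, Matrix.mul_apply]
        exact Finset.sum_congr rfl fun i _ => Finset.sum_congr rfl fun j _ => by
          rw [hXsym i j, pow_two]
      have h2 : ∑ i, ∑ j, X i j ^ 2 ≤ ∑ i, ∑ j, X i i * X j j :=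
        Finset.sum_le_sum fun i _ => Finset.sum_le_sum fun j _ => aux_entry_sq_le hX i j
      have h3 : ∑ i, ∑ j, X i i * X j j = X.trace ^ 2 := by
        rw [Matrix.trace, pow_two, Finset.sum_mul_sum]
        rfl
      rw [h1]
      calc ∑ i, ∑ j, X i j ^ 2 ≤ X.trace ^ 2 := by rw [← h3]; exact h2
        _ = 1 := by rw [hXtr]; norm_num
    rw [hfrob, htr]
    linarith
  · -- Part 2
    set μ : Fin n → ℝ := hZ.isHermitian.eigenvalues with hμ
    set σ : Equiv.Perm (Fin n) := Tuple.sort μ with hσ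
    have hμnn : ∀ i, 0 ≤ μ i := fun i => hZ.eigenvalues_nonneg i
    -- unique zero eigenvalue
    have hcard : Fintype.card {i // μ i ≠ 0} = n - 1 := by
      have := hZ.isHermitian.rank_eq_card_non_zero_eigs
      rw [hrank, ← hμ] at this
      omega
    have hcard0 : Fintype.card {i // μ i = 0} = 1 := by
      have heq : Fintype.card {i // μ i = 0} = Fintype.card {i // ¬ μ i ≠ 0} :=
        Fintype.card_congr (Equiv.subtypeEquivRight fun i => by simp)
      rw [heq, Fintype.card_subtype_compl, hcard, Fintype.card_fin]
      omega
    obtain ⟨⟨i0, hi0⟩, hi0u⟩ := Fintype.card_eq_one_iff.mp hcard0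
    have huniq : ∀ i, μ i = 0 → i = i0 := fun i hi =>
      congrArg Subtype.val (hi0u ⟨i, hi⟩)
    set z0 : Fin n := ⟨0, by omega⟩ with hz0
    set z1 : Fin n := ⟨1, by omega⟩ with hz1
    have hmono : Monotone (μ ∘ σ) := Tuple.monotone_sort μ
    have hσ0 : σ z0 = i0 := by
      apply huniq
      have h1 : μ (σ z0) ≤ μ (σ (σ.symm i0)) := hmono (by
        show z0 ≤ σ.symm i0
        exact Fin.mk_le_of_le_val (by omega))
      rw [Equiv.apply_symm_apply] at h1
      rw [hi0] at h1
      exact le_antisymm h1 (hμnn _)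
    set lam : ℝ := μ (σ z1) with hlam
    have hσ1ne : σ z1 ≠ i0 := by
      rw [← hσ0]
      intro h
      have := σ.injective h
      simp [hz0, hz1, Fin.ext_iff] at this
    have hlampos : 0 < lam :=
      lt_of_le_of_ne (hμnn _) fun h => hσ1ne (huniq _ h.symm)
    have hlamle : ∀ i, i ≠ i0 → lam ≤ μ i := by
      intro i hi
      have hj : σ.symm i ≠ z0 := by
        intro h
        apply hi
        rw [← hσ0, ← h, Equiv.apply_symm_apply]
      have hv0 : (σ.symm i).val ≠ 0 := by
        intro h
        exact hj (Fin.ext (by simp [hz0, h]))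
      have h1 : z1 ≤ σ.symm i := Fin.mk_le_of_le_val (by omega)
      have := hmono h1
      simpa using this
    -- eigDesc value
    have hEig : eigDesc hZ.isHermitian ⟨n - 2, by omega⟩ = lam := by
      show μ (σ (⟨n - 2, by omega⟩ : Fin n).rev) = lam
      have hrev : (⟨n - 2, by omega⟩ : Fin n).rev = z1 := by
        apply Fin.ext
        simp [hz1, Fin.val_rev]
        omega
      rw [hrev]
    -- eigenvector for zero eigenvalue
    set u : Fin n → ℝ := ⇑(hZ.isHermitian.eigenvectorBasis i0) with hu
    have hZu : Z *ᵥ u = 0 := by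
      rw [hu, hZ.isHermitian.mulVec_eigenvectorBasis, ← hμ, hi0, zero_smul]
    have huspan : u ∈ Submodule.span ℝ {v} := by
      rw [← hker]
      exact LinearMap.mem_ker.mpr (by rw [Matrix.mulVecLin_apply]; exact hZu)
    obtain ⟨c, hc⟩ := Submodule.mem_span_singleton.mp huspan
    have hu1 : u ⬝ᵥ u = 1 := by
      have h := (hZ.isHermitian.eigenvectorBasis).orthonormal.1 i0
      rw [EuclideanSpace.norm_eq] at h
      have h2 : ∑ i, u i ^ 2 = 1 := by
        have h3 := congrArg (· ^ 2) h
        simp only [one_pow] at h3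
        rw [Real.sq_sqrt (Finset.sum_nonneg fun i _ => sq_nonneg _)] at h3
        simpa [hu, Real.norm_eq_abs, sq_abs] using h3
      simpa [dotProduct, pow_two] using h2
    have hc2 : c ^ 2 = 1 := by
      have : (c • v) ⬝ᵥ (c • v) = 1 := by rw [hc, hu1]
      simpa [smul_dotProduct, dotProduct_smul, hv, pow_two, mul_assoc] using this
    -- PSD of M
    set U : Matrix (Fin n) (Fin n) ℝ := (hZ.isHermitian.eigenvectorUnitary : Matrix (Fin n) (Fin n) ℝ)
      with hU
    have hyi0 : ∀ x : Fin n → ℝ, (star U *ᵥ x) i0 = u ⬝ᵥ x := by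
      intro x
      simp only [hU, mulVec, dotProduct, Matrix.star_apply, star_trivial,
        Matrix.IsHermitian.eigenvectorUnitary_apply, hu]
    have hvx : ∀ x : Fin n → ℝ, (u ⬝ᵥ x) ^ 2 = (v ⬝ᵥ x) ^ 2 := by
      intro x
      rw [← hc, smul_dotProduct, smul_eq_mul, mul_pow, hc2, one_mul]
    set M : Matrix (Fin n) (Fin n) ℝ := Z - lam • ((1 : Matrix (Fin n) (Fin n) ℝ) - P)
      with hM
    have hPherm : P.IsHermitian := by
      rw [Matrix.IsHermitian, Matrix.conjTranspose_eq_transpose_of_trivial, hPt]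
    have hMpsd : M.PosSemidef := by
      refine Matrix.PosSemidef.of_dotProduct_mulVec_nonneg ?_ ?_
      · rw [hM, Matrix.IsHermitian, Matrix.conjTranspose_sub, Matrix.conjTranspose_smul,
          Matrix.conjTranspose_sub, Matrix.conjTranspose_one, hPherm.eq, hZ.isHermitian.eq, star_trivial]
      · intro x
        rw [star_trivial]
        have hPx : x ⬝ᵥ (P *ᵥ x) = (v ⬝ᵥ x) ^ 2 := by
          calc x ⬝ᵥ (P *ᵥ x) = ∑ i, ∑ k, (x i * v i) * (v k * x k) := by
                simp only [hP, mulVec, vecMulVec_apply, dotProduct, Finset.mul_sum]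
                exact Finset.sum_congr rfl fun i _ => Finset.sum_congr rfl fun k _ => by ring
            _ = (∑ i, x i * v i) * (∑ k, v k * x k) := by rw [← Finset.sum_mul_sum]
            _ = (v ⬝ᵥ x) ^ 2 := by
                rw [dotProduct, pow_two]
                congr 1
                exact Finset.sum_congr rfl fun i _ => mul_comm _ _
        have hexp : x ⬝ᵥ (M *ᵥ x) = x ⬝ᵥ (Z *ᵥ x) - lam * (x ⬝ᵥ x - (v ⬝ᵥ x) ^ 2) := by
          rw [hM, Matrix.sub_mulVec, Matrix.smul_mulVec, Matrix.sub_mulVec,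
            Matrix.one_mulVec, dotProduct_sub, dotProduct_smul, dotProduct_sub, hPx]
          simp [smul_eq_mul]
        rw [hexp, aux_quadform_eig hZ.isHermitian x, aux_norm_pres hZ.isHermitian x, ← hvx x, ← hyi0 x]
        set y : Fin n → ℝ := star U *ᵥ x with hy
        have hsplit : ∑ i, μ i * y i ^ 2 - lam * (∑ i, y i ^ 2 - y i0 ^ 2) =
            ∑ i, ((μ i - lam) * y i ^ 2 + (if i = i0 then lam * y i ^ 2 else 0)) := by
          rw [Finset.sum_add_distrib, Finset.sum_ite_eq' Finset.univ i0
            (fun i => lam * y i ^ 2)]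
          simp only [Finset.mem_univ, if_true, sub_mul, Finset.sum_sub_distrib,
            ← Finset.mul_sum]
          ring
        rw [hsplit]
        apply Finset.sum_nonneg
        intro i _
        by_cases hi : i = i0
        · subst hi
          simp only [if_true]
          rw [hi0]
          ring_nf
          positivity
        · simp only [hi, if_false, add_zero]
          exact mul_nonneg (sub_nonneg.mpr (hlamle i hi)) (sq_nonneg _)
    -- conclude
    have htrM : (M * X).trace = (Z * X).trace - lam * (1 - q) := by
      rw [hM, Matrix.sub_mul, Matrix.smul_mul, Matrix.sub_mul, Matrix.one_mul,
        Matrix.trace_sub, Matrix.trace_smul, Matrix.trace_sub, htrPX, hXtr]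
      simp [smul_eq_mul]
    have hkey : lam * (1 - q) ≤ (Z * X).trace := by
      have := aux_trace_mul_nonneg hMpsd hX
      rw [htrM] at this
      linarith
    have hZt : (Zᵀ * X).trace = (Z * X).trace := by
      rw [← Matrix.conjTranspose_eq_transpose_of_trivial, hZ.isHermitian.eq]
    rw [hEig, hZt, le_div_iff₀ hlampos]
    nlinarith [hkey]
end

section
/- Let the sequence (h_t) of nonnegative reals satisfy h_{t+1} ≤ h_t − ξ h_t + ξ²β/2 for all t ≥ 0 and all ξ ∈ [0,1], with β > 0 and h_1 ≤ β. Then h_t ≤ 8β/t for all t ≥ 1. -/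
open Matrix

/-- Sublinear Frank-Wolfe rate: if `h_{t+1} ≤ h_t - ξ h_t + ξ²β/2` for all `t`
and `ξ ∈ [0,1]`, with `h` nonnegative and `h 1 ≤ β`, then `h t ≤ 8β/t` for all
`t ≥ 1`. -/
theorem stmt_16 (h : ℕ → ℝ) (β : ℝ) (hβ : 0 < β)
    (hpos : ∀ t, 0 ≤ h t)
    (hrec : ∀ t : ℕ, ∀ ξ ∈ Set.Icc (0 : ℝ) 1,
      h (t + 1) ≤ h t - ξ * h t + ξ ^ 2 * β / 2)
    (h1 : h 1 ≤ β) :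
    ∀ t : ℕ, 1 ≤ t → h t ≤ 8 * β / (t : ℝ) := by
  have key : ∀ t : ℕ, 1 ≤ t → h t ≤ 2 * β / ((t : ℝ) + 1) := by
    intro t
    induction t with
    | zero => intro h0; omega
    | succ n ih =>
      intro _
      rcases Nat.eq_zero_or_pos n with rfl | hn
      · norm_num; linarith
      · have ihn := ih hn
        have hx : (1 : ℝ) ≤ (n : ℝ) := by exact_mod_cast hn
        set x : ℝ := (n : ℝ) with hxdef
        have hx2 : (0 : ℝ) < x + 2 := by linarith
        have hx1 : (0 : ℝ) < x + 1 := by linarith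
        have hξ : (2 / (x + 2)) ∈ Set.Icc (0 : ℝ) 1 := by
          constructor
          · positivity
          · rw [div_le_one hx2]; linarith
        have hr := hrec n _ hξ
        have h1ξ : 0 ≤ 1 - 2 / (x + 2) := by
          rw [sub_nonneg, div_le_one hx2]; linarith
        have step : h (n + 1) ≤ (1 - 2 / (x + 2)) * (2 * β / (x + 1))
            + (2 / (x + 2)) ^ 2 * β / 2 := by
          have hm := mul_le_mul_of_nonneg_left ihn h1ξ
          nlinarith [hpos n]
        refine step.trans ?_
        have cast1 : ((n + 1 : ℕ) : ℝ) + 1 = x + 2 := by push_cast; ring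
        rw [cast1]
        have e1 : (1 - 2 / (x + 2)) * (2 * β / (x + 1)) + (2 / (x + 2)) ^ 2 * β / 2
            = (2 * β * (x * (x + 2) + (x + 1))) / ((x + 1) * (x + 2) ^ 2) := by
          field_simp; ring
        rw [e1, div_le_div_iff₀ (by positivity) hx2]
        nlinarith
  intro t ht
  have hk := key t ht
  have hxt : (1 : ℝ) ≤ (t : ℝ) := by exact_mod_cast ht
  have h2 : 2 * β / ((t : ℝ) + 1) ≤ 8 * β / (t : ℝ) := by
    rw [div_le_div_iff₀ (by linarith) (by linarith)]
    nlinarith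
  linarith
end
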